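/- arXiv:2203.05838 — 2 statements merged into one kernel-verified Lean document; each statement's English description precedes it below -/
import Mathlib

section
/- If 0 < λ ≤ M/(H+M), then λ·R/(F(c)·H + M) − (1−λ)·R/((1−F(c))·H) < 0 for every c ∈ (0,T) (the expected gain from running a pool over delegating is negative); moreover, if T > λ·R/(H+M), there exists a unique c' ∈ (0,T) satisfying c' = λ·R/(F(c')·H + M), the threshold below which honest agents run pools when agents above the threshold stay idle. -/
/-!
The pool gain is negative because, after clearing denominators, it has the sign of
`λ·(H + M) - (F(c)·H + M)`, and `λ·(H + M) ≤ M < F(c)·H + M`.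

The threshold is a fixed point of `g c = λ·R/(F(c)·H + M)`. Since `F` increases, `g` is antitone,
so it has at most one fixed point. It has one in `(0, T)` by the intermediate value theorem:
`g 0 = λ·R/M > 0`, and because `F(c) → 1` as `c → T`, `g c` eventually drops below every
`s > λ·R/(H + M)`, so `g b < b` for some `b < T`.
-/

open Set Function

def costSupport (T : EReal) : Set ℝ := {c | 0 ≤ c ∧ (c : EReal) < T}

lemma Icc_subset_costSupport {T : EReal} {b : ℝ} (hb : (b : EReal) < T) :
    Icc 0 b ⊆ costSupport T :=
  fun _ hx => ⟨hx.1, lt_of_le_of_lt (EReal.coe_le_coe_iff.mpr hx.2) hb⟩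

lemma AntitoneOn.eq_of_isFixedPt {α : Type*} [LinearOrder α] {g : α → α} {s : Set α}
    (hg : AntitoneOn g s) {x y : α} (hx : x ∈ s) (hy : y ∈ s)
    (hgx : IsFixedPt g x) (hgy : IsFixedPt g y) : x = y := by
  by_contra hne
  rcases lt_or_gt_of_ne hne with hxy | hyx
  · have := hg hx hy hxy.le
    rw [hgx, hgy] at this
    exact (this.trans_lt hxy).false
  · have := hg hy hx hyx.le
    rw [hgx, hgy] at this
    exact (this.trans_lt hyx).false

lemma exists_isFixedPt_mem_Ioo {g : ℝ → ℝ} {a b : ℝ} (hab : a ≤ b)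
    (hg : ContinuousOn g (Icc a b)) (ha : a < g a) (hb : g b < b) :
    ∃ x ∈ Ioo a b, IsFixedPt g x := by
  have hcont : ContinuousOn (fun x => g x - x) (Icc a b) := hg.sub continuousOn_id
  obtain ⟨x, hx, hx0⟩ := intermediate_value_Ioo' hab hcont ⟨sub_neg.mpr hb, sub_pos.mpr ha⟩
  exact ⟨x, hx, sub_eq_zero.mp hx0⟩

lemma pool_gain_neg {H M R lam f : ℝ} (hH : 0 < H) (hM : 0 ≤ M) (hR : 0 < R)
    (hf0 : 0 < f) (hf1 : f < 1) (hlam : lam ≤ M / (H + M)) :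
    lam * R / (f * H + M) - (1 - lam) * R / ((1 - f) * H) < 0 := by
  have hkey : lam * (H + M) ≤ M := (le_div_iff₀ (by positivity)).mp hlam
  rw [sub_neg, div_lt_div_iff₀ (by positivity) (mul_pos (sub_pos.mpr hf1) hH)]
  nlinarith [mul_pos hR (mul_pos hf0 hH), mul_nonneg hR.le (sub_nonneg.mpr hkey)]

section CostDistribution

variable {T : EReal} {F : ℝ → ℝ}

lemma exists_mem_costSupport_ge_lt_apply (hF : MonotoneOn F (costSupport T))
    (hFlim : ∀ y : ℝ, y < 1 → ∃ c : ℝ, 0 ≤ c ∧ (c : EReal) < T ∧ y < F c)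
    {s y : ℝ} (hs : s ∈ costSupport T) (hy : y < 1) :
    ∃ b ∈ costSupport T, s ≤ b ∧ y < F b := by
  obtain ⟨c, hc0, hcT, hyc⟩ := hFlim y hy
  have hbT : max c s ∈ costSupport T := by
    rcases max_choice c s with h | h <;> rw [h]
    exacts [⟨hc0, hcT⟩, hs]
  exact ⟨max c s, hbT, le_max_right c s,
    hyc.trans_le (hF ⟨hc0, hcT⟩ hbT (le_max_left c s))⟩

lemma exists_mem_costSupport_div_lt_self (hF : MonotoneOn F (costSupport T))
    (hFlim : ∀ y : ℝ, y < 1 → ∃ c : ℝ, 0 ≤ c ∧ (c : EReal) < T ∧ y < F c)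
    {H M K : ℝ} (hH : 0 < H) (hHM : 0 < H + M) (hK : 0 < K)
    (hKT : ((K / (H + M) : ℝ) : EReal) < T) :
    ∃ b ∈ costSupport T, K / (F b * H + M) < b := by
  obtain ⟨s, hKs, hsT⟩ := EReal.lt_iff_exists_real_btwn.mp hKT
  have hKs : K / (H + M) < s := EReal.coe_lt_coe_iff.mp hKs
  have hs0 : 0 < s := (div_pos hK hHM).trans hKs
  have hKsHM : K / s < H + M := by
    rw [div_lt_iff₀ hs0]; rwa [div_lt_iff₀ hHM, mul_comm] at hKs
  obtain ⟨b, hb, hsb, hyb⟩ := exists_mem_costSupport_ge_lt_apply hF hFlim ⟨hs0.le, hsT⟩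
    (y := (K / s - M) / H) (by rw [div_lt_one hH]; linarith)
  have hden : K / s < F b * H + M := by
    rw [div_lt_iff₀ hH] at hyb; linarith
  refine ⟨b, hb, ?_⟩
  rw [div_lt_iff₀ ((div_pos hK hs0).trans hden)]
  calc K = s * (K / s) := by field_simp
    _ < s * (F b * H + M) := mul_lt_mul_of_pos_left hden hs0
    _ ≤ b * (F b * H + M) := by gcongr; exact (div_pos hK hs0).le.trans hden.le

end CostDistribution

lemma antitoneOn_div_mul_add {F : ℝ → ℝ} {s : Set ℝ} (hF : MonotoneOn F s)
    {H M K : ℝ} (hH : 0 ≤ H) (hK : 0 ≤ K) (hpos : ∀ c ∈ s, 0 < F c * H + M) :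
    AntitoneOn (fun c => K / (F c * H + M)) s :=
  fun a ha _ hb hab => div_le_div_of_nonneg_left hK (hpos a ha) (by gcongr; exact hF ha hb hab)

theorem low_lambda_pool_gain_negative_and_idle_threshold_general
    (H M R lam : ℝ) (T : EReal) (F : ℝ → ℝ)
    (hH : 0 < H) (hM : 0 < M) (hR : 0 < R)
    (hF0 : F 0 = 0)
    (hFmono : ∀ c₁ c₂ : ℝ, 0 ≤ c₁ → c₁ < c₂ → (c₂ : EReal) < T → F c₁ < F c₂)
    (hFcont : ContinuousOn F {c : ℝ | 0 ≤ c ∧ (c : EReal) < T})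
    (hFlt1 : ∀ c : ℝ, 0 ≤ c → (c : EReal) < T → F c < 1)
    (hFlim : ∀ y : ℝ, y < 1 → ∃ c : ℝ, 0 ≤ c ∧ (c : EReal) < T ∧ y < F c)
    (hlam : 0 < lam ∧ lam ≤ M / (H + M)) :
    (∀ c : ℝ, 0 < c → (c : EReal) < T →
        lam * R / (F c * H + M) - (1 - lam) * R / ((1 - F c) * H) < 0) ∧
    (((lam * R / (H + M) : ℝ) : EReal) < T →
        ∃! c : ℝ, (0 < c ∧ (c : EReal) < T) ∧ c = lam * R / (F c * H + M)) := by
  obtain ⟨hlam0, hlamle⟩ := hlam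
  have hF : StrictMonoOn F (costSupport T) := fun a ha b hb hab => hFmono a b ha.1 hab hb.2
  have hFpos : ∀ c : ℝ, 0 < c → (c : EReal) < T → 0 < F c := fun c hc hcT => by
    simpa [hF0] using hFmono 0 c le_rfl hc hcT
  refine ⟨fun c hc hcT => pool_gain_neg hH hM.le hR (hFpos c hc hcT) (hFlt1 c hc.le hcT) hlamle,
    fun hKT => ?_⟩
  have hden : ∀ c ∈ costSupport T, 0 < F c * H + M := fun c hc => by
    have := hF.monotoneOn (Icc_subset_costSupport hc.2 ⟨le_rfl, hc.1⟩) hc hc.1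
    rw [hF0] at this
    positivity
  set g : ℝ → ℝ := fun c => lam * R / (F c * H + M)
  have hg : AntitoneOn g (costSupport T) :=
    antitoneOn_div_mul_add hF.monotoneOn hH.le (mul_pos hlam0 hR).le hden
  have hgcont : ContinuousOn g (costSupport T) :=
    continuousOn_const.div ((hFcont.mul continuousOn_const).add continuousOn_const)
      fun c hc => (hden c hc).ne'
  have hg0 : 0 < g 0 := by simp only [g, hF0, zero_mul, zero_add]; positivity
  obtain ⟨b, hb, hgb⟩ :=
    exists_mem_costSupport_div_lt_self hF.monotoneOn hFlim hH (by positivity) (mul_pos hlam0 hR) hKT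
  obtain ⟨x, hx, hgx⟩ :=
    exists_isFixedPt_mem_Ioo hb.1 (hgcont.mono (Icc_subset_costSupport hb.2)) hg0 hgb
  have hxT : x ∈ costSupport T := Icc_subset_costSupport hb.2 (Ioo_subset_Icc_self hx)
  exact ⟨x, ⟨⟨hx.1, hxT.2⟩, hgx.symm⟩,
    fun y ⟨⟨hy0, hyT⟩, hgy⟩ => hg.eq_of_isFixedPt ⟨hy0.le, hyT⟩ hxT hgy.symm hgx⟩

/-- If `0 < λ ≤ M/(H+M)`, then
`λ·R/(F(c)·H + M) − (1−λ)·R/((1−F(c))·H) < 0` for every `c ∈ (0,T)` (the expected gain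
from running a pool over delegating is negative); moreover, if `T > λ·R/(H+M)`, there
exists a unique `c' ∈ (0,T)` satisfying `c' = λ·R/(F(c')·H + M)`, the threshold below
which honest agents run pools when agents above the threshold stay idle. -/
theorem low_lambda_pool_gain_negative_and_idle_threshold
    (H M R lam : ℝ) (T : EReal) (F : ℝ → ℝ)
    (hH : 0 < H) (hM : 0 < M) (hMH : M < H) (hR : 0 < R)
    (hT : 0 < T)
    (hF0 : F 0 = 0)
    (hFmono : ∀ c₁ c₂ : ℝ, 0 ≤ c₁ → c₁ < c₂ → (c₂ : EReal) < T → F c₁ < F c₂)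
    (hFcont : ContinuousOn F {c : ℝ | 0 ≤ c ∧ (c : EReal) < T})
    (hFlt1 : ∀ c : ℝ, 0 ≤ c → (c : EReal) < T → F c < 1)
    (hFlim : ∀ y : ℝ, y < 1 → ∃ c : ℝ, 0 ≤ c ∧ (c : EReal) < T ∧ y < F c)
    (hlam : 0 < lam ∧ lam ≤ M / (H + M)) :
    (∀ c : ℝ, 0 < c → (c : EReal) < T →
        lam * R / (F c * H + M) - (1 - lam) * R / ((1 - F c) * H) < 0) ∧
    (((lam * R / (H + M) : ℝ) : EReal) < T →
        ∃! c : ℝ, (0 < c ∧ (c : EReal) < T) ∧ c = lam * R / (F c * H + M)) :=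
  low_lambda_pool_gain_negative_and_idle_threshold_general H M R lam T F hH hM hR hF0 hFmono hFcont
    hFlt1 hFlim hlam
end

section
/- Discrete version: let n and m be positive integers with n > m, let r > 0 and λ ∈ (0,1). There exists a unique c* ∈ (0,T) satisfying c* = λ·r/(F(c*)·n + m) − (1−λ)·r/(n − F(c*)·n) if and only if λ > m/(n+m). -/
/-!
Write `H c` for the right-hand side of the indifference condition. Since `F` is increasing, the
first term of `H` decreases and the second increases in `c`, so `H` is strictly decreasing and
`c ↦ c - H c` is strictly increasing: there is at most one solution. As `F c → 1` the second term
blows up, so `H` eventually becomes negative; by the intermediate value theorem a positive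
solution therefore exists exactly when `H 0 = λr/m - (1-λ)r/n` is positive, i.e. when
`λ > m/(n+m)`.
-/

open Filter Topology Set

theorem existsUnique_fixedPoint_gt_iff {g : ℝ → ℝ} {s : Set ℝ} {a : ℝ} (hs : s.OrdConnected)
    (ha : a ∈ s) (hg : StrictAntiOn g s) (hgc : ContinuousOn g s) (hfar : ∃ b ∈ s, g b < b) :
    (∃! c, (a < c ∧ c ∈ s) ∧ c = g c) ↔ a < g a := by
  have hmono : StrictMonoOn (fun x => x - g x) s := fun x hx y hy hxy => by
    have := hg hx hy hxy
    linarith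
  constructor
  · rintro ⟨c, ⟨⟨hac, hc⟩, hfix⟩, -⟩
    linarith [hg ha hc hac]
  · intro hga
    obtain ⟨b, hb, hgb⟩ := hfar
    have hab : a < b := by
      by_contra! hba
      linarith [hg.antitoneOn hb ha hba]
    have hIcc : Icc a b ⊆ s := hs.out ha hb
    obtain ⟨c, ⟨hac, hcb⟩, hc⟩ := intermediate_value_Ioo hab.le
      (continuousOn_id.sub (hgc.mono hIcc)) (show (0 : ℝ) ∈ Ioo (a - g a) (b - g b) by
        constructor <;> linarith)
    have hcs : c ∈ s := hIcc ⟨hac.le, hcb.le⟩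
    replace hc : c - g c = 0 := hc
    refine ⟨c, ⟨⟨hac, hcs⟩, by linarith⟩, ?_⟩
    rintro d ⟨⟨-, hds⟩, hd⟩
    exact hmono.injOn hds hcs (show d - g d = c - g c by linarith)

/-- The right-hand side of the indifference condition, in terms of `p = F c`. -/
noncomputable def indifferenceGap (n m r lam p : ℝ) : ℝ :=
  lam * r / (p * n + m) - (1 - lam) * r / (n - p * n)

section indifferenceGap

variable {n m r lam : ℝ}

theorem indifferenceGap_strictAntiOn (hn : 0 < n) (hm : 0 < m) (hr : 0 < r) (hlam0 : 0 ≤ lam)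
    (hlam1 : lam < 1) : StrictAntiOn (indifferenceGap n m r lam) (Ico 0 1) := by
  rintro p ⟨hp0, -⟩ q ⟨-, hq1⟩ hpq
  have hhonest : lam * r / (q * n + m) ≤ lam * r / (p * n + m) :=
    div_le_div_of_nonneg_left (by positivity) (by positivity) (by nlinarith)
  have hmalicious : (1 - lam) * r / (n - p * n) < (1 - lam) * r / (n - q * n) :=
    div_lt_div_of_pos_left (by nlinarith) (by nlinarith) (by nlinarith)
  unfold indifferenceGap
  linarith

theorem indifferenceGap_continuousOn (hn : 0 < n) (hm : 0 < m) :
    ContinuousOn (indifferenceGap n m r lam) (Ico 0 1) := by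
  refine ContinuousOn.sub (continuousOn_const.div (by fun_prop) ?_)
    (continuousOn_const.div (by fun_prop) ?_) <;>
  · rintro p ⟨hp0, hp1⟩
    nlinarith

theorem indifferenceGap_zero_pos_iff (hn : 0 < n) (hm : 0 < m) (hr : 0 < r) :
    0 < indifferenceGap n m r lam 0 ↔ m / (n + m) < lam := by
  simp only [indifferenceGap, zero_mul, zero_add, sub_zero, sub_pos]
  rw [div_lt_div_iff₀ hn hm, div_lt_iff₀ (by positivity)]
  constructor <;> intro h <;> nlinarith

theorem tendsto_indifferenceGap_atBot (hn : 0 < n) (hm : 0 < m) (hr : 0 < r) (hlam1 : lam < 1) :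
    Tendsto (indifferenceGap n m r lam) (𝓝[<] 1) atBot := by
  have hhonest : Tendsto (fun p => lam * r / (p * n + m)) (𝓝[<] 1) (𝓝 (lam * r / (1 * n + m))) :=
    (tendsto_const_nhds.div ((tendsto_id.mul_const n).add_const m) (by positivity)).mono_left
      nhdsWithin_le_nhds
  have hvanish : Tendsto (fun p => n - p * n) (𝓝[<] 1) (𝓝[>] 0) := by
    refine tendsto_nhdsWithin_iff.2 ⟨?_, ?_⟩
    · simpa using ((tendsto_const_nhds (x := n)).sub (tendsto_id.mul_const n)).mono_left
        (nhdsWithin_le_nhds (a := (1 : ℝ)))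
    · filter_upwards [self_mem_nhdsWithin] with p (hp : p < 1)
      show 0 < n - p * n
      nlinarith
  have hmalicious : Tendsto (fun p => (1 - lam) * r / (n - p * n)) (𝓝[<] 1) atTop := by
    refine (hvanish.inv_tendsto_nhdsGT_zero.const_mul_atTop
      (by nlinarith : 0 < (1 - lam) * r)).congr fun p => (div_eq_mul_inv _ _).symm
  exact (hhonest.add_atBot (tendsto_neg_atTop_atBot.comp hmalicious)).congr fun p =>
    (sub_eq_add_neg _ _).symm

end indifferenceGap

theorem discrete_threshold_equilibrium_general
    (n m : ℕ) (r lam : ℝ) (T : EReal) (F : ℝ → ℝ)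
    (hm : 0 < m) (hnm : m < n) (hr : 0 < r)
    (hF0 : F 0 = 0)
    (hFmono : ∀ c₁ c₂ : ℝ, 0 ≤ c₁ → c₁ < c₂ → (c₂ : EReal) < T → F c₁ < F c₂)
    (hFcont : ContinuousOn F {c : ℝ | 0 ≤ c ∧ (c : EReal) < T})
    (hFlt1 : ∀ c : ℝ, 0 ≤ c → (c : EReal) < T → F c < 1)
    (hFlim : ∀ y : ℝ, y < 1 → ∃ c : ℝ, 0 ≤ c ∧ (c : EReal) < T ∧ y < F c)
    (hlam : 0 < lam ∧ lam < 1) :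
    (∃! c : ℝ, (0 < c ∧ (c : EReal) < T) ∧
        c = lam * r / (F c * (n : ℝ) + (m : ℝ))
              - (1 - lam) * r / ((n : ℝ) - F c * (n : ℝ)))
      ↔ (m : ℝ) / ((n : ℝ) + (m : ℝ)) < lam := by
  obtain ⟨hlam0, hlam1⟩ := hlam
  have hm' : (0 : ℝ) < m := by exact_mod_cast hm
  have hn' : (0 : ℝ) < n := by exact_mod_cast hm.trans hnm
  set s := {c : ℝ | 0 ≤ c ∧ (c : EReal) < T}
  have hs : s.OrdConnected := ⟨fun x hx y hy z hz =>
    ⟨hx.1.trans hz.1, (EReal.coe_le_coe_iff.2 hz.2).trans_lt hy.2⟩⟩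
  have h0s : (0 : ℝ) ∈ s := by
    obtain ⟨c, hc0, hcT, -⟩ := hFlim 0 one_pos
    exact ⟨le_rfl, (EReal.coe_le_coe_iff.2 hc0).trans_lt hcT⟩
  have hFmono' : StrictMonoOn F s := fun x hx y hy hxy => hFmono x y hx.1 hxy hy.2
  have hFs : MapsTo F s (Ico 0 1) := fun c hc =>
    ⟨hF0 ▸ hFmono'.monotoneOn h0s hc hc.1, hFlt1 c hc.1 hc.2⟩
  have hfar : ∃ b ∈ s, indifferenceGap n m r lam (F b) < b := by
    obtain ⟨y, hy1, hy⟩ := mem_nhdsLT_iff_exists_Ioo_subset.1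
      ((tendsto_indifferenceGap_atBot hn' hm' hr hlam1).eventually_lt_atBot 0)
    obtain ⟨b, hb0, hbT, hyb⟩ := hFlim y hy1
    exact ⟨b, ⟨hb0, hbT⟩, (hy ⟨hyb, hFlt1 b hb0 hbT⟩).trans_le hb0⟩
  have key := existsUnique_fixedPoint_gt_iff hs h0s
    ((indifferenceGap_strictAntiOn hn' hm' hr hlam0.le hlam1).comp_strictMonoOn hFmono' hFs)
    ((indifferenceGap_continuousOn hn' hm').comp hFcont hFs) hfar
  simp only [Function.comp_apply, hF0] at key
  rw [← indifferenceGap_zero_pos_iff hn' hm' hr]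
  refine (existsUnique_congr fun c => ?_).trans key
  exact and_congr_left' ⟨fun ⟨hc0, hcT⟩ => ⟨hc0, hc0.le, hcT⟩, fun ⟨hc0, _, hcT⟩ => ⟨hc0, hcT⟩⟩

/-- Discrete version: let `n` and `m` be positive integers with
`n > m`, let `r > 0` and `λ ∈ (0,1)`. There exists a unique `c* ∈ (0,T)` satisfying
`c* = λ·r/(F(c*)·n + m) − (1−λ)·r/(n − F(c*)·n)` if and only if `λ > m/(n+m)`. -/
theorem discrete_threshold_equilibrium
    (n m : ℕ) (r lam : ℝ) (T : EReal) (F : ℝ → ℝ)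
    (hm : 0 < m) (hnm : m < n) (hr : 0 < r)
    (hT : 0 < T)
    (hF0 : F 0 = 0)
    (hFmono : ∀ c₁ c₂ : ℝ, 0 ≤ c₁ → c₁ < c₂ → (c₂ : EReal) < T → F c₁ < F c₂)
    (hFcont : ContinuousOn F {c : ℝ | 0 ≤ c ∧ (c : EReal) < T})
    (hFlt1 : ∀ c : ℝ, 0 ≤ c → (c : EReal) < T → F c < 1)
    (hFlim : ∀ y : ℝ, y < 1 → ∃ c : ℝ, 0 ≤ c ∧ (c : EReal) < T ∧ y < F c)
    (hlam : 0 < lam ∧ lam < 1) :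
    (∃! c : ℝ, (0 < c ∧ (c : EReal) < T) ∧
        c = lam * r / (F c * (n : ℝ) + (m : ℝ))
              - (1 - lam) * r / ((n : ℝ) - F c * (n : ℝ)))
      ↔ (m : ℝ) / ((n : ℝ) + (m : ℝ)) < lam :=
  discrete_threshold_equilibrium_general n m r lam T F hm hnm hr hF0 hFmono hFcont hFlt1 hFlim hlam
end
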